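/- For ν > 1/2 and t > 0, the integral representation r_ν(t)/t = (∫_0^1 (1-s²)^{ν-1/2} cosh(ts) ds) / ((2ν-1) ∫_0^1 (1-s²)^{ν-3/2} cosh(ts) ds) holds, where r_ν(t) = I_ν(t)/I_{ν-1}(t). -/

import Mathlib

open Real Set Filter MeasureTheory

/-- Modified Bessel function of the first kind, `I_ν(t) = Σ_k (t/2)^(2k+ν)/(k! Γ(ν+k+1))`. -/
noncomputable def besselI (ν t : ℝ) : ℝ :=
  ∑' k : ℕ, (t / 2) ^ (ν + 2 * (k : ℝ)) / ((Nat.factorial k : ℝ) * Real.Gamma (ν + (k : ℝ) + 1))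

/-- The ratio `r_ν(t) = I_ν(t)/I_{ν-1}(t)`. -/
noncomputable def besselRatio (ν t : ℝ) : ℝ := besselI ν t / besselI (ν - 1) t

lemma sq_image_Ioo : (fun s : ℝ => s ^ 2) '' Ioo 0 1 = Ioo 0 1 := by
  ext x
  simp only [mem_image, mem_Ioo]
  constructor
  · rintro ⟨s, ⟨hs0, hs1⟩, rfl⟩
    exact ⟨by positivity, by nlinarith⟩
  · rintro ⟨hx0, hx1⟩
    refine ⟨Real.sqrt x, ⟨Real.sqrt_pos.2 hx0, ?_⟩, Real.sq_sqrt hx0.le⟩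
    rw [show (1:ℝ) = Real.sqrt 1 by simp]
    exact Real.sqrt_lt_sqrt hx0.le hx1

lemma sq_injOn_Ioo : InjOn (fun s : ℝ => s ^ 2) (Ioo 0 1) := by
  intro a ha b hb h
  simp only at h
  nlinarith [ha.1, hb.1]

lemma sq_hasDeriv : ∀ x ∈ Ioo (0:ℝ) 1,
    HasDerivWithinAt (fun s : ℝ => s ^ 2) (2 * x) (Ioo 0 1) x := by
  intro x _
  simpa using (hasDerivAt_pow 2 x).hasDerivWithinAt

lemma change_var_sq (g : ℝ → ℝ) :
    ∫ x in Ioo (0:ℝ) 1, g x = ∫ s in Ioo (0:ℝ) 1, 2 * s * g (s ^ 2) := by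
  have h := integral_image_eq_integral_abs_deriv_smul measurableSet_Ioo sq_hasDeriv sq_injOn_Ioo g
  rw [sq_image_Ioo] at h
  rw [h]
  refine setIntegral_congr_fun measurableSet_Ioo fun s hs => ?_
  rw [smul_eq_mul, abs_of_nonneg (by linarith [hs.1] : (0:ℝ) ≤ 2 * s)]

lemma integrableOn_change_var_sq (g : ℝ → ℝ) :
    IntegrableOn g (Ioo 0 1) ↔ IntegrableOn (fun s => 2 * s * g (s ^ 2)) (Ioo (0:ℝ) 1) := by
  have h := integrableOn_image_iff_integrableOn_abs_deriv_smul measurableSet_Ioo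
    sq_hasDeriv sq_injOn_Ioo g
  rw [sq_image_Ioo] at h
  rw [h]
  constructor <;> intro h2 <;> refine h2.congr_fun (fun s hs => ?_) measurableSet_Ioo
  · beta_reduce; rw [smul_eq_mul, abs_of_nonneg (by linarith [hs.1] : (0:ℝ) ≤ 2 * s)]
  · beta_reduce; rw [smul_eq_mul, abs_of_nonneg (by linarith [hs.1] : (0:ℝ) ≤ 2 * s)]

lemma beta_eq_ofReal {a b : ℝ} {x : ℝ} (hx : x ∈ Ioo (0:ℝ) 1) :
    (x:ℂ) ^ ((a:ℂ) - 1) * (1 - (x:ℂ)) ^ ((b:ℂ) - 1)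
      = ((x ^ (a - 1) * (1 - x) ^ (b - 1) : ℝ) : ℂ) := by
  rw [Complex.ofReal_mul, Complex.ofReal_cpow hx.1.le, Complex.ofReal_cpow (by linarith [hx.2])]
  push_cast
  ring

lemma real_beta_integrableOn {a b : ℝ} (ha : 0 < a) (hb : 0 < b) :
    IntegrableOn (fun x : ℝ => x ^ (a - 1) * (1 - x) ^ (b - 1)) (Ioo 0 1) := by
  have h := (Complex.betaIntegral_convergent (u := a) (v := b) (by simpa) (by simpa)).1
  have h2 : IntegrableOn (fun x : ℝ => (x:ℂ) ^ ((a:ℂ) - 1) * (1 - (x:ℂ)) ^ ((b:ℂ) - 1))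
      (Ioo 0 1) := h.mono_set Ioo_subset_Ioc_self
  refine IntegrableOn.congr_fun h2.re (fun x hx => ?_) measurableSet_Ioo
  simp only [beta_eq_ofReal hx, Complex.ofReal_re]
  rfl

lemma real_beta_value {a b : ℝ} (ha : 0 < a) (hb : 0 < b) :
    ∫ x in Ioo (0:ℝ) 1, x ^ (a - 1) * (1 - x) ^ (b - 1)
      = Real.Gamma a * Real.Gamma b / Real.Gamma (a + b) := by
  have key : Complex.betaIntegral a b
      = ((∫ x in Ioo (0:ℝ) 1, x ^ (a - 1) * (1 - x) ^ (b - 1) : ℝ) : ℂ) := by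
    rw [Complex.betaIntegral, intervalIntegral.integral_of_le (by norm_num : (0:ℝ) ≤ 1),
      integral_Ioc_eq_integral_Ioo]
    rw [setIntegral_congr_fun measurableSet_Ioo
      (fun x hx => beta_eq_ofReal (a := a) (b := b) hx)]
    exact integral_ofReal
  have h := Complex.Gamma_mul_Gamma_eq_betaIntegral (s := a) (t := b) (by simpa) (by simpa)
  have hne : Real.Gamma (a + b) ≠ 0 := (Real.Gamma_pos_of_pos (by linarith)).ne'
  rw [show ((a:ℂ) + b) = ((a + b : ℝ) : ℂ) by push_cast; ring] at h
  rw [Complex.Gamma_ofReal, Complex.Gamma_ofReal, Complex.Gamma_ofReal, key] at h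
  have : ((Real.Gamma a * Real.Gamma b : ℝ) : ℂ)
      = ((Real.Gamma (a + b) * ∫ x in Ioo (0:ℝ) 1, x ^ (a - 1) * (1 - x) ^ (b - 1) : ℝ) : ℂ) := by
    push_cast; exact h
  have h2 := Complex.ofReal_injective this
  field_simp
  linarith [h2]

lemma Gamma_nat_add_half (k : ℕ) :
    Real.Gamma ((k : ℝ) + 1 / 2) = (Nat.factorial (2 * k) : ℝ) * Real.sqrt π
      / (4 ^ k * (Nat.factorial k : ℝ)) := by
  induction k with
  | zero => norm_num [show ((0:ℕ):ℝ) + 1/2 = 1/2 by norm_num, Real.Gamma_one_half_eq]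
  | succ n ih =>
    have h1 : ((n + 1 : ℕ) : ℝ) + 1 / 2 = ((n : ℝ) + 1 / 2) + 1 := by push_cast; ring
    rw [h1, Real.Gamma_add_one (by positivity), ih]
    have h2 : 2 * (n + 1) = (2 * n + 1) + 1 := by ring
    rw [h2, Nat.factorial_succ, Nat.factorial_succ, Nat.factorial_succ]
    have h4 : (0:ℝ) < 4 ^ n := by positivity
    have hf : (0:ℝ) < (Nat.factorial n : ℝ) := by exact_mod_cast n.factorial_pos
    field_simp
    push_cast
    ring

lemma sq_change_pointwise {μ : ℝ} {k : ℕ} {s : ℝ} (hs : s ∈ Ioo (0:ℝ) 1) :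
    2 * s * ((s ^ 2) ^ ((k : ℝ) + 1 / 2 - 1) * (1 - s ^ 2) ^ (μ + 1 - 1))
      = 2 * ((1 - s ^ 2) ^ μ * s ^ (2 * k)) := by
  have hs0 : (0:ℝ) < s := hs.1
  have h1 : (s ^ 2 : ℝ) ^ ((k : ℝ) + 1 / 2 - 1) = s ^ (2 * (k : ℝ) - 1) := by
    rw [← Real.rpow_natCast s 2, ← Real.rpow_mul hs0.le]
    norm_num
    ring_nf
  have h2 : s * s ^ (2 * (k : ℝ) - 1) = s ^ (2 * k : ℕ) := by
    rw [← Real.rpow_natCast s (2 * k)]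
    rw [show s * s ^ (2 * (k:ℝ) - 1) = s ^ (1:ℝ) * s ^ (2 * (k:ℝ) - 1) by rw [Real.rpow_one]]
    rw [← Real.rpow_add hs0]
    push_cast
    ring_nf
  calc 2 * s * ((s ^ 2) ^ ((k : ℝ) + 1 / 2 - 1) * (1 - s ^ 2) ^ (μ + 1 - 1))
      = 2 * (s * s ^ (2 * (k:ℝ) - 1)) * (1 - s ^ 2) ^ μ := by rw [h1]; ring_nf
    _ = 2 * ((1 - s ^ 2) ^ μ * s ^ (2 * k)) := by rw [h2]; ring

lemma Bk_integrableOn (μ : ℝ) (hμ : -1 < μ) (k : ℕ) :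
    IntegrableOn (fun s : ℝ => (1 - s ^ 2) ^ μ * s ^ (2 * k)) (Ioo 0 1) := by
  have ha : (0:ℝ) < (k : ℝ) + 1 / 2 := by positivity
  have hb : (0:ℝ) < μ + 1 := by linarith
  have h := (integrableOn_change_var_sq
    (fun x : ℝ => x ^ ((k : ℝ) + 1 / 2 - 1) * (1 - x) ^ (μ + 1 - 1))).1
    (real_beta_integrableOn ha hb)
  have h2 : IntegrableOn (fun x : ℝ => 2⁻¹ * (2 * x * ((x ^ 2) ^ ((k:ℝ) + 1 / 2 - 1) * (1 - x ^ 2) ^ (μ + 1 - 1)))) (Ioo 0 1) := h.const_mul (2⁻¹ : ℝ)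
  refine IntegrableOn.congr_fun h2 (fun s hs => ?_) measurableSet_Ioo
  rw [sq_change_pointwise hs]
  ring

lemma Bk_value (μ : ℝ) (hμ : -1 < μ) (k : ℕ) :
    ∫ s in Ioo (0:ℝ) 1, (1 - s ^ 2) ^ μ * s ^ (2 * k)
      = Real.Gamma ((k : ℝ) + 1 / 2) * Real.Gamma (μ + 1)
        / (2 * Real.Gamma (μ + (k : ℝ) + 3 / 2)) := by
  have ha : (0:ℝ) < (k : ℝ) + 1 / 2 := by positivity
  have hb : (0:ℝ) < μ + 1 := by linarith
  have h := real_beta_value ha hb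
  rw [change_var_sq (fun x : ℝ => x ^ ((k : ℝ) + 1 / 2 - 1) * (1 - x) ^ (μ + 1 - 1))] at h
  rw [setIntegral_congr_fun measurableSet_Ioo
    (fun s hs => sq_change_pointwise (μ := μ) (k := k) (s := s) hs)] at h
  rw [integral_const_mul] at h
  rw [show (k : ℝ) + 1 / 2 + (μ + 1) = μ + (k : ℝ) + 3 / 2 by ring] at h
  rw [show ∫ s in Ioo (0:ℝ) 1, (1 - s ^ 2) ^ μ * s ^ (2 * k)
      = 2⁻¹ * (2 * ∫ s in Ioo (0:ℝ) 1, (1 - s ^ 2) ^ μ * s ^ (2 * k)) by ring, h]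
  field_simp

lemma J_hasSum (μ t : ℝ) (hμ : -1 < μ) (ht : 0 < t) :
    HasSum (fun k : ℕ => t ^ (2 * k) / (Nat.factorial (2 * k) : ℝ) *
        (∫ s in Ioo (0:ℝ) 1, (1 - s ^ 2) ^ μ * s ^ (2 * k)))
      (∫ s in Ioo (0:ℝ) 1, (1 - s ^ 2) ^ μ * Real.cosh (t * s)) := by
  set F : ℕ → ℝ → ℝ :=
    fun k s => t ^ (2 * k) / (Nat.factorial (2 * k) : ℝ) * ((1 - s ^ 2) ^ μ * s ^ (2 * k))
    with hFdef
  have hF_int : ∀ k, Integrable (F k) (volume.restrict (Ioo 0 1)) := fun k =>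
    (Bk_integrableOn μ hμ k).const_mul _
  have hBnonneg : ∀ k, 0 ≤ ∫ s in Ioo (0:ℝ) 1, (1 - s ^ 2) ^ μ * s ^ (2 * k) := fun k =>
    setIntegral_nonneg measurableSet_Ioo fun s hs => by
      have h1 : (0:ℝ) ≤ 1 - s ^ 2 := by nlinarith [hs.1, hs.2]
      have h2 : (0:ℝ) < s := hs.1
      positivity
  have hFk_int_eq : ∀ k, (∫ s in Ioo (0:ℝ) 1, F k s)
      = t ^ (2 * k) / (Nat.factorial (2 * k) : ℝ) *
        ∫ s in Ioo (0:ℝ) 1, (1 - s ^ 2) ^ μ * s ^ (2 * k) := fun k => by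
    rw [hFdef]
    exact integral_const_mul _ _
  have hBle : ∀ k, (∫ s in Ioo (0:ℝ) 1, (1 - s ^ 2) ^ μ * s ^ (2 * k))
      ≤ ∫ s in Ioo (0:ℝ) 1, (1 - s ^ 2) ^ μ * s ^ (2 * 0) := fun k => by
    refine setIntegral_mono_on (Bk_integrableOn μ hμ k) (Bk_integrableOn μ hμ 0)
      measurableSet_Ioo fun s hs => ?_
    have h1 : (0:ℝ) ≤ 1 - s ^ 2 := by nlinarith [hs.1, hs.2]
    have h3 : (0:ℝ) ≤ (1 - s ^ 2) ^ μ := Real.rpow_nonneg h1 μ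
    have h2 : s ^ (2 * k) ≤ 1 := pow_le_one₀ hs.1.le hs.2.le
    have h4 : (0:ℝ) ≤ s ^ (2 * k) := pow_nonneg hs.1.le _
    calc (1 - s ^ 2) ^ μ * s ^ (2 * k) ≤ (1 - s ^ 2) ^ μ * 1 := by nlinarith
      _ = (1 - s ^ 2) ^ μ * s ^ (2 * 0) := by norm_num
  have hF_sum : Summable fun k => ∫ s in Ioo (0:ℝ) 1, ‖F k s‖ := by
    have hnorm : ∀ k, (∫ s in Ioo (0:ℝ) 1, ‖F k s‖) = ∫ s in Ioo (0:ℝ) 1, F k s := fun k => by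
      refine setIntegral_congr_fun measurableSet_Ioo fun s hs => ?_
      have h1 : (0:ℝ) ≤ 1 - s ^ 2 := by nlinarith [hs.1, hs.2]
      have h2 : (0:ℝ) < s := hs.1
      have h5 : (0:ℝ) ≤ F k s := by rw [hFdef]; positivity
      exact Real.norm_of_nonneg h5
    simp only [hnorm, hFk_int_eq]
    refine Summable.of_nonneg_of_le (fun k => ?_) (fun k => ?_)
      (((Real.hasSum_cosh t).summable).mul_right
        (∫ s in Ioo (0:ℝ) 1, (1 - s ^ 2) ^ μ * s ^ (2 * 0)))
    · exact mul_nonneg (by positivity) (hBnonneg k)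
    · have h6 : (0:ℝ) ≤ t ^ (2 * k) / (Nat.factorial (2 * k) : ℝ) := by positivity
      exact mul_le_mul_of_nonneg_left (hBle k) h6
  have key := hasSum_integral_of_summable_integral_norm hF_int hF_sum
  have hint_eq : (∫ s in Ioo (0:ℝ) 1, ∑' k, F k s)
      = ∫ s in Ioo (0:ℝ) 1, (1 - s ^ 2) ^ μ * Real.cosh (t * s) := by
    refine setIntegral_congr_fun measurableSet_Ioo fun s hs => ?_
    have hc : HasSum (fun k : ℕ => (1 - s ^ 2) ^ μ * ((t * s) ^ (2 * k) / (Nat.factorial (2 * k) : ℝ)))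
        ((1 - s ^ 2) ^ μ * Real.cosh (t * s)) := (Real.hasSum_cosh (t * s)).mul_left _
    have : (fun k : ℕ => (1 - s ^ 2) ^ μ * ((t * s) ^ (2 * k) / (Nat.factorial (2 * k) : ℝ)))
        = fun k => F k s := by
      funext k
      rw [hFdef]
      simp only [mul_pow]
      ring
    rw [this] at hc
    exact hc.tsum_eq.symm ▸ hc.tsum_eq
  rw [hint_eq] at key
  have : (fun k => ∫ s in Ioo (0:ℝ) 1, F k s)
      = fun k : ℕ => t ^ (2 * k) / (Nat.factorial (2 * k) : ℝ) *
        (∫ s in Ioo (0:ℝ) 1, (1 - s ^ 2) ^ μ * s ^ (2 * k)) := funext hFk_int_eq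
  rwa [this] at key

lemma poisson_hasSum (ν t : ℝ) (hν : -(1/2 : ℝ) < ν) (ht : 0 < t) :
    HasSum (fun k : ℕ => (Real.sqrt π * Real.Gamma (ν + 1/2) / 2) *
        ((t/2) ^ (2*k) / ((Nat.factorial k : ℝ) * Real.Gamma (ν + (k:ℝ) + 1))))
      (∫ s in Ioo (0:ℝ) 1, (1 - s ^ 2) ^ (ν - 1/2) * Real.cosh (t * s)) := by
  have hμ : -1 < ν - 1/2 := by linarith
  have h := J_hasSum (ν - 1/2) t hμ ht
  have heq : (fun k : ℕ => t ^ (2 * k) / (Nat.factorial (2 * k) : ℝ) *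
        (∫ s in Ioo (0:ℝ) 1, (1 - s ^ 2) ^ (ν - 1/2) * s ^ (2 * k)))
      = fun k : ℕ => (Real.sqrt π * Real.Gamma (ν + 1/2) / 2) *
        ((t/2) ^ (2*k) / ((Nat.factorial k : ℝ) * Real.Gamma (ν + (k:ℝ) + 1))) := by
    funext k
    rw [Bk_value (ν - 1/2) hμ k, _root_.Gamma_nat_add_half k]
    rw [show ν - 1/2 + 1 = ν + 1/2 by ring, show ν - 1/2 + (k:ℝ) + 3/2 = ν + (k:ℝ) + 1 by ring]
    have hΓ : (0:ℝ) < Real.Gamma (ν + (k:ℝ) + 1) :=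
      Real.Gamma_pos_of_pos (by have : (0:ℝ) ≤ (k:ℝ) := Nat.cast_nonneg k; linarith)
    have hfact : ((Nat.factorial (2*k) : ℝ)) ≠ 0 := by exact_mod_cast (Nat.factorial_pos _).ne'
    have hfact2 : ((Nat.factorial k : ℝ)) ≠ 0 := by exact_mod_cast (Nat.factorial_pos _).ne'
    have h4 : ((4:ℝ) ^ k) ≠ 0 := by positivity
    have htdiv : (t/2) ^ (2*k) = t ^ (2*k) / 4 ^ k := by
      rw [div_pow, show ((2:ℝ)) ^ (2*k) = 4 ^ k by rw [pow_mul]; norm_num]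
    rw [htdiv]
    field_simp
  rwa [heq] at h

lemma besselI_eq (ν t : ℝ) (hν : -(1/2 : ℝ) < ν) (ht : 0 < t) :
    besselI ν t = (t/2) ^ ν *
      ∑' k : ℕ, (t/2) ^ (2*k) / ((Nat.factorial k : ℝ) * Real.Gamma (ν + (k:ℝ) + 1)) := by
  rw [besselI, ← tsum_mul_left]
  refine tsum_congr fun k => ?_
  have ht2 : (0:ℝ) < t/2 := by linarith
  rw [Real.rpow_add ht2, show (2 * (k:ℝ)) = ((2*k : ℕ) : ℝ) by push_cast; ring,
    Real.rpow_natCast, mul_div_assoc]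

lemma poisson_eq (ν t : ℝ) (hν : -(1/2 : ℝ) < ν) (ht : 0 < t) :
    (t/2) ^ ν * ∫ s in Ioo (0:ℝ) 1, (1 - s ^ 2) ^ (ν - 1/2) * Real.cosh (t * s)
      = (Real.sqrt π * Real.Gamma (ν + 1/2) / 2) * besselI ν t := by
  have h := poisson_hasSum ν t hν ht
  set c := Real.sqrt π * Real.Gamma (ν + 1/2) / 2 with hc
  have hcpos : 0 < c := by
    rw [hc]
    have := Real.Gamma_pos_of_pos (show (0:ℝ) < ν + 1/2 by linarith)
    have := Real.sqrt_pos.2 Real.pi_pos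
    positivity
  have h2 := h.mul_left c⁻¹
  simp only [← mul_assoc, inv_mul_cancel₀ hcpos.ne', one_mul] at h2
  rw [besselI_eq ν t hν ht, h2.tsum_eq]
  field_simp

lemma integral_pos (ν t : ℝ) (hν : -(1/2 : ℝ) < ν) (ht : 0 < t) :
    0 < ∫ s in Ioo (0:ℝ) 1, (1 - s ^ 2) ^ (ν - 1/2) * Real.cosh (t * s) := by
  have h := poisson_hasSum ν t hν ht
  rw [← h.tsum_eq]
  have hterm : ∀ k : ℕ, 0 < (Real.sqrt π * Real.Gamma (ν + 1/2) / 2) *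
      ((t/2) ^ (2*k) / ((Nat.factorial k : ℝ) * Real.Gamma (ν + (k:ℝ) + 1))) := by
    intro k
    have hΓ1 := Real.Gamma_pos_of_pos (show (0:ℝ) < ν + 1/2 by linarith)
    have hΓ2 : (0:ℝ) < Real.Gamma (ν + (k:ℝ) + 1) :=
      Real.Gamma_pos_of_pos (by have : (0:ℝ) ≤ (k:ℝ) := Nat.cast_nonneg k; linarith)
    have hfact : (0:ℝ) < (Nat.factorial k : ℝ) := by exact_mod_cast Nat.factorial_pos k
    have hsq := Real.sqrt_pos.2 Real.pi_pos
    have ht2 : (0:ℝ) < t/2 := by linarith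
    positivity
  exact Summable.tsum_pos h.summable (fun k => (hterm k).le) 0 (hterm 0)

/-- integral representation of `r_ν(t)/t` for `ν > 1/2`, `t > 0`. -/
theorem besselRatio_div_self_integral_repr (ν t : ℝ) (hν : 1 / 2 < ν) (ht : 0 < t) :
    besselRatio ν t / t =
      (∫ s in (0:ℝ)..1, (1 - s ^ 2) ^ (ν - 1 / 2) * Real.cosh (t * s)) /
        ((2 * ν - 1) * ∫ s in (0:ℝ)..1, (1 - s ^ 2) ^ (ν - 3 / 2) * Real.cosh (t * s)) := by
  have hν1 : -(1/2 : ℝ) < ν := by linarith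
  have hν2 : -(1/2 : ℝ) < ν - 1 := by linarith
  rw [intervalIntegral.integral_of_le zero_le_one, integral_Ioc_eq_integral_Ioo,
    intervalIntegral.integral_of_le zero_le_one, integral_Ioc_eq_integral_Ioo]
  have hP1 := poisson_eq ν t hν1 ht
  have hP2 := poisson_eq (ν - 1) t hν2 ht
  rw [show ν - 1 - 1/2 = ν - 3/2 by ring, show ν - 1 + 1/2 = ν - 1/2 by ring] at hP2
  set N := ∫ s in Ioo (0:ℝ) 1, (1 - s ^ 2) ^ (ν - 1/2) * Real.cosh (t * s) with hNdef
  set D := ∫ s in Ioo (0:ℝ) 1, (1 - s ^ 2) ^ (ν - 3/2) * Real.cosh (t * s) with hDdef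
  have hN : 0 < N := integral_pos ν t hν1 ht
  have hD : 0 < D := by
    have h := integral_pos (ν - 1) t hν2 ht
    rwa [show ν - 1 - 1/2 = ν - 3/2 by ring] at h
  have hsq : (0:ℝ) < Real.sqrt π := Real.sqrt_pos.2 Real.pi_pos
  have hΓm : (0:ℝ) < Real.Gamma (ν - 1/2) := Real.Gamma_pos_of_pos (by linarith)
  have hΓp : (0:ℝ) < Real.Gamma (ν + 1/2) := Real.Gamma_pos_of_pos (by linarith)
  have hΓν : Real.Gamma (ν + 1/2) = (ν - 1/2) * Real.Gamma (ν - 1/2) := by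
    rw [show ν + 1/2 = (ν - 1/2) + 1 by ring,
      Real.Gamma_add_one (by intro h; linarith : ν - 1/2 ≠ 0)]
  have ht2 : (0:ℝ) < t / 2 := by linarith
  set c1 := Real.sqrt π * Real.Gamma (ν + 1/2) / 2 with hc1
  set c2 := Real.sqrt π * Real.Gamma (ν - 1/2) / 2 with hc2
  have hc1pos : 0 < c1 := by rw [hc1]; positivity
  have hc2pos : 0 < c2 := by rw [hc2]; positivity
  set r := (t/2) ^ (ν - 1 : ℝ) with hr
  have hrpos : 0 < r := Real.rpow_pos_of_pos ht2 _
  have hrpow : (t/2) ^ (ν : ℝ) = r * (t/2) := by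
    rw [hr, show (t/2) ^ (ν : ℝ) = (t/2) ^ (ν - 1 + 1 : ℝ) by norm_num,
      Real.rpow_add ht2, Real.rpow_one]
  have hc12 : c1 = (ν - 1/2) * c2 := by rw [hc1, hc2, hΓν]; ring
  have hI1 : besselI ν t = r * (t/2) * N / c1 := by
    rw [eq_div_iff hc1pos.ne']
    linear_combination N * hrpow - hP1
  have hI2 : besselI (ν - 1) t = r * D / c2 := by
    rw [eq_div_iff hc2pos.ne']
    linear_combination -hP2
  rw [besselRatio, hI1, hI2, hc12, show 2 * ν - 1 = 2 * (ν - 1/2) by ring]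
  have hνh : (ν - 1/2) ≠ 0 := by intro h; linarith
  set w := ν - 1/2 with hw
  field_simp
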